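/- Let Λ be a finite, non-zero measure on [0,1] with μ := ∫_{[0,1]} log(1/(1−p)) p^{−2} Λ(dp) < ∞, let f(y) := ∫_{[0,1]} (1 − (1−p)^{e^y}) e^{−y} p^{−2} Λ(dp), choose κ ≥ 0 with f(y) ≤ μ/2 for all y ≥ κ, and set b_n := ∫_κ^{log n} dy/(μ − f(y)). Then for every integer k ≥ 1, as n → ∞, b_n = (log n)/μ + (1/μ²)∫_0^{log n} f(y) dy + (1/μ³)∫_0^{log n} f(y)² dy + … + (1/μ^{k+1})∫_0^{log n} f(y)^k dy + O(∫_0^{log n} f(y)^{k+1} dy) + O(1). -/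

import Mathlib

open MeasureTheory Filter Set Asymptotics

/-!
On `[κ, ∞)` we have `0 ≤ f ≤ μ / 2`, so the geometric expansion
`1 / (μ - f) = ∑_{j ≤ k} f ^ j / μ ^ (j + 1) + f ^ (k + 1) / (μ ^ (k + 1) * (μ - f))`
holds with remainder at most `2 f ^ (k + 1) / μ ^ (k + 2)`. Integrating it over `[κ, log n]` gives
the expansion, the integrals over `[0, κ]` making up the `O(1)` term.

The bounds `0 ≤ f ≤ μ` and the measurability of `f` come from the pointwise bound
`1 - x ^ E ≤ E log (1 / x)` and from `f` being antitone, which holds because `E ↦ 1 - x ^ E` is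
concave and vanishes at `0`. Finiteness of `μ` forces `Λ {0} = Λ {1} = 0`, and `Λ ≠ 0` then
gives `μ > 0`.
-/

theorem one_div_sub_eq_geom_sum_add {K : Type*} [Field K] {m x : K} (hm : m ≠ 0)
    (hmx : m - x ≠ 0) (k : ℕ) :
    1 / (m - x) =
      ∑ j ∈ Finset.range (k + 1), x ^ j / m ^ (j + 1) + x ^ (k + 1) / (m ^ (k + 1) * (m - x)) := by
  induction k with
  | zero =>
    rw [Finset.sum_range_one]
    field_simp
    ring
  | succ k ih =>
    rw [Finset.sum_range_succ, ih]
    field_simp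
    ring

theorem one_sub_rpow_le_mul_log {x E : ℝ} (hx : 0 < x) :
    1 - x ^ E ≤ E * Real.log (1 / x) := by
  rw [Real.rpow_def_of_pos hx, one_div, Real.log_inv]
  linarith [Real.add_one_le_exp (Real.log x * E)]

/-- Bernoulli's inequality `1 + r s ≤ (1 + s) ^ r` with `s = x ^ E₁ - 1` and `r = E₂ / E₁`. -/
theorem one_sub_rpow_div_le_of_le {x E₁ E₂ : ℝ} (hx0 : 0 ≤ x) (hE₁ : 0 < E₁)
    (hE : E₁ ≤ E₂) : (1 - x ^ E₂) / E₂ ≤ (1 - x ^ E₁) / E₁ := by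
  have hE₂ : 0 < E₂ := hE₁.trans_le hE
  have hbernoulli : 1 + E₂ / E₁ * (x ^ E₁ - 1) ≤ x ^ E₂ := by
    have h := one_add_mul_self_le_rpow_one_add (s := x ^ E₁ - 1)
      (by linarith [Real.rpow_nonneg hx0 E₁]) ((one_le_div hE₁).2 hE)
    rwa [add_sub_cancel, ← Real.rpow_mul hx0, mul_div_cancel₀ _ hE₁.ne'] at h
  have h := mul_le_mul_of_nonneg_left hbernoulli hE₁.le
  rw [mul_add, ← mul_assoc, mul_div_cancel₀ _ hE₁.ne'] at h
  rw [div_le_div_iff₀ hE₂ hE₁]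
  linarith

noncomputable def muIntegrand (p : ℝ) : ℝ := Real.log (1 / (1 - p)) / p ^ 2

noncomputable def fIntegrand (y p : ℝ) : ℝ := (1 - (1 - p) ^ Real.exp y) / Real.exp y / p ^ 2

/-- Finiteness of `μ` is expressed by this integral, which is infinite as soon as `Λ` charges `0`
or `1`; the junk values of `muIntegrand` at these points are therefore irrelevant. -/
noncomputable def muLIntegral (Λ : Measure ℝ) : ENNReal :=
  ∫⁻ p in Icc (0 : ℝ) 1, (if p = 0 ∨ p = 1 then ⊤ else ENNReal.ofReal (muIntegrand p)) ∂Λ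

section Integrands

variable {p : ℝ}

theorem muIntegrand_pos (hp : p ∈ Ioo (0 : ℝ) 1) : 0 < muIntegrand p := by
  refine div_pos (Real.log_pos ?_) (pow_pos hp.1 2)
  rw [one_lt_div (by linarith [hp.2])]
  linarith [hp.1]

theorem fIntegrand_nonneg (hp : p ∈ Ioo (0 : ℝ) 1) (y : ℝ) : 0 ≤ fIntegrand y p := by
  have hle : (1 - p) ^ Real.exp y ≤ 1 :=
    Real.rpow_le_one (by linarith [hp.2]) (by linarith [hp.1]) (Real.exp_pos y).le
  exact div_nonneg (div_nonneg (sub_nonneg.2 hle) (Real.exp_pos y).le) (sq_nonneg p)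

theorem fIntegrand_le_muIntegrand (hp : p ∈ Ioo (0 : ℝ) 1) (y : ℝ) :
    fIntegrand y p ≤ muIntegrand p := by
  refine div_le_div_of_nonneg_right ?_ (sq_nonneg p)
  rw [div_le_iff₀ (Real.exp_pos y), mul_comm]
  exact one_sub_rpow_le_mul_log (by linarith [hp.2])

theorem antitone_fIntegrand (hp : p ∈ Ioo (0 : ℝ) 1) : Antitone fun y => fIntegrand y p :=
  fun _ _ hy => div_le_div_of_nonneg_right
    (one_sub_rpow_div_le_of_le (by linarith [hp.2]) (Real.exp_pos _) (Real.exp_le_exp.2 hy))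
    (sq_nonneg p)

end Integrands

section Measure

variable {Λ : Measure ℝ}

theorem ae_restrict_Icc_mem_Ioo (hμfin : muLIntegral Λ ≠ ⊤) :
    ∀ᵐ p ∂Λ.restrict (Icc (0 : ℝ) 1), p ∈ Ioo (0 : ℝ) 1 := by
  have hnull : ∀ a : ℝ, a = 0 ∨ a = 1 → Λ {a} = 0 := by
    intro a ha
    unfold muLIntegral at hμfin
    by_contra hne
    refine hμfin (eq_top_iff.2 (le_trans ?_ (lintegral_mono_set (s := {a}) ?_)))
    · rw [lintegral_singleton, if_pos ha, ENNReal.top_mul hne]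
    · rcases ha with rfl | rfl <;> simp
  rw [ae_restrict_iff' measurableSet_Icc, ae_iff]
  refine measure_mono_null (t := {0} ∪ {1}) (fun p hp => ?_)
    (measure_union_null (hnull 0 (Or.inl rfl)) (hnull 1 (Or.inr rfl)))
  simp only [mem_ofPred_eq, Classical.not_imp, mem_Icc, mem_Ioo, not_and_or, not_lt] at hp
  obtain ⟨⟨h0, h1⟩, hp | hp⟩ := hp
  · exact Or.inl (le_antisymm hp h0)
  · exact Or.inr (le_antisymm h1 hp)

theorem integrableOn_muIntegrand (hμfin : muLIntegral Λ ≠ ⊤) :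
    IntegrableOn muIntegrand (Icc (0 : ℝ) 1) Λ := by
  have hmeas : Measurable muIntegrand := by unfold muIntegrand; fun_prop
  refine ⟨hmeas.aestronglyMeasurable, ?_⟩
  rw [hasFiniteIntegral_iff_norm]
  refine lt_of_le_of_lt (lintegral_mono_ae ?_) hμfin.lt_top
  filter_upwards [ae_restrict_Icc_mem_Ioo hμfin] with p hp
  rw [if_neg (by rintro (rfl | rfl) <;> simp at hp), Real.norm_of_nonneg (muIntegrand_pos hp).le]

theorem integrableOn_fIntegrand (hμfin : muLIntegral Λ ≠ ⊤) (y : ℝ) :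
    IntegrableOn (fIntegrand y) (Icc (0 : ℝ) 1) Λ := by
  have hmeas : Measurable (fIntegrand y) := by unfold fIntegrand; fun_prop
  refine (integrableOn_muIntegrand hμfin).mono' hmeas.aestronglyMeasurable ?_
  filter_upwards [ae_restrict_Icc_mem_Ioo hμfin] with p hp
  rw [Real.norm_of_nonneg (fIntegrand_nonneg hp y)]
  exact fIntegrand_le_muIntegrand hp y

theorem setIntegral_muIntegrand_pos (hΛ : Λ ≠ 0) (hsupp : Λ (Icc (0 : ℝ) 1)ᶜ = 0)
    (hμfin : muLIntegral Λ ≠ ⊤) :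
    0 < ∫ p in Icc (0 : ℝ) 1, muIntegrand p ∂Λ := by
  have hpos : ∀ᵐ p ∂Λ.restrict (Icc (0 : ℝ) 1), 0 < muIntegrand p :=
    (ae_restrict_Icc_mem_Ioo hμfin).mono fun p hp => muIntegrand_pos hp
  rw [integral_pos_iff_support_of_nonneg_ae (hpos.mono fun p hp => hp.le)
    (integrableOn_muIntegrand hμfin)]
  rw [Measure.restrict_eq_self_of_ae_mem
    ((measure_eq_zero_iff_ae_notMem.1 hsupp).mono fun _ => not_not.1)] at hpos ⊢
  have hsupport : Function.support muIntegrand =ᵐ[Λ] (univ : Set ℝ) :=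
    ae_eq_univ.2 (ae_iff.1 (hpos.mono fun p hp => hp.ne'))
  rw [measure_congr hsupport]
  exact Measure.measure_univ_pos.2 hΛ

theorem setIntegral_fIntegrand_nonneg (hμfin : muLIntegral Λ ≠ ⊤) (y : ℝ) :
    0 ≤ ∫ p in Icc (0 : ℝ) 1, fIntegrand y p ∂Λ :=
  integral_nonneg_of_ae ((ae_restrict_Icc_mem_Ioo hμfin).mono fun _ hp => fIntegrand_nonneg hp y)

theorem setIntegral_fIntegrand_le (hμfin : muLIntegral Λ ≠ ⊤) (y : ℝ) :
    ∫ p in Icc (0 : ℝ) 1, fIntegrand y p ∂Λ ≤ ∫ p in Icc (0 : ℝ) 1, muIntegrand p ∂Λ :=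
  integral_mono_ae (integrableOn_fIntegrand hμfin y) (integrableOn_muIntegrand hμfin)
    ((ae_restrict_Icc_mem_Ioo hμfin).mono fun _ hp => fIntegrand_le_muIntegrand hp y)

theorem antitone_setIntegral_fIntegrand (hμfin : muLIntegral Λ ≠ ⊤) :
    Antitone fun y => ∫ p in Icc (0 : ℝ) 1, fIntegrand y p ∂Λ :=
  fun _ _ hy => integral_mono_ae (integrableOn_fIntegrand hμfin _) (integrableOn_fIntegrand hμfin _)
    ((ae_restrict_Icc_mem_Ioo hμfin).mono fun _ hp => antitone_fIntegrand hp hy)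

end Measure

noncomputable def geomRemainder (μ : ℝ) (k : ℕ) (x : ℝ) : ℝ :=
  x ^ (k + 1) / (μ ^ (k + 1) * (μ - x))

noncomputable def expansionSum (f : ℝ → ℝ) (μ : ℝ) (k : ℕ) (L : ℝ) : ℝ :=
  ∑ j ∈ Finset.range (k + 1), (1 / μ ^ (j + 1)) * ∫ y in (0 : ℝ)..L, f y ^ j

section Expansion

variable {f : ℝ → ℝ} {μ κ L x : ℝ} {k : ℕ}

theorem geomRemainder_nonneg (hμ : 0 < μ) (hx0 : 0 ≤ x) (hx : x ≤ μ / 2) :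
    0 ≤ geomRemainder μ k x :=
  div_nonneg (pow_nonneg hx0 _) (mul_nonneg (pow_nonneg hμ.le _) (by linarith))

theorem geomRemainder_le (hμ : 0 < μ) (hx0 : 0 ≤ x) (hx : x ≤ μ / 2) :
    geomRemainder μ k x ≤ 2 / μ ^ (k + 2) * x ^ (k + 1) := by
  calc geomRemainder μ k x ≤ x ^ (k + 1) / (μ ^ (k + 1) * (μ / 2)) :=
        div_le_div_of_nonneg_left (pow_nonneg hx0 _) (by positivity)
          (mul_le_mul_of_nonneg_left (by linarith) (pow_nonneg hμ.le _))
    _ = 2 / μ ^ (k + 2) * x ^ (k + 1) := by field_simp; ring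

theorem expansionSum_eq (f : ℝ → ℝ) (μ : ℝ) (k : ℕ) (L : ℝ) :
    expansionSum f μ k L =
      L / μ + ∑ j ∈ Finset.Icc 1 k, (1 / μ ^ (j + 1)) * ∫ y in (0 : ℝ)..L, f y ^ j := by
  rw [expansionSum, Finset.range_eq_Ico, Finset.sum_eq_sum_Ico_succ_bot (Nat.succ_pos k)]
  simp [div_eq_inv_mul, Finset.Ico_add_one_right_eq_Icc]

theorem intervalIntegrable_pow_of_nonneg_of_le (hf : Measurable f) (hf0 : ∀ y, 0 ≤ f y)
    (hfμ : ∀ y, f y ≤ μ) (j : ℕ) (a b : ℝ) :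
    IntervalIntegrable (fun y => f y ^ j) volume a b :=
  (intervalIntegrable_const (c := μ ^ j)).mono_fun (hf.pow_const j).aestronglyMeasurable
    (ae_of_all _ fun y => by
      simp only [Real.norm_of_nonneg (pow_nonneg (hf0 y) j),
        Real.norm_of_nonneg (pow_nonneg ((hf0 y).trans (hfμ y)) j)]
      exact pow_le_pow_left₀ (hf0 y) (hfμ y) j)

theorem intervalIntegrable_geomRemainder (hμ : 0 < μ) (hf : Measurable f) (hf0 : ∀ y, 0 ≤ f y)
    (hfμ : ∀ y, f y ≤ μ) (hκ : ∀ y ≥ κ, f y ≤ μ / 2) (hL : κ ≤ L) :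
    IntervalIntegrable (fun y => geomRemainder μ k (f y)) volume κ L := by
  have hmeas : Measurable fun y => geomRemainder μ k (f y) := by unfold geomRemainder; fun_prop
  have hbound := (intervalIntegrable_pow_of_nonneg_of_le hf hf0 hfμ (k + 1) κ L).const_mul
    (2 / μ ^ (k + 2))
  refine hbound.mono_fun' hmeas.aestronglyMeasurable ?_
  rw [uIoc_of_le hL]
  refine (ae_restrict_iff' measurableSet_Ioc).2 (ae_of_all _ fun y hy => ?_)
  dsimp only
  rw [Real.norm_of_nonneg (geomRemainder_nonneg hμ (hf0 y) (hκ y hy.1.le))]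
  exact geomRemainder_le hμ (hf0 y) (hκ y hy.1.le)

theorem integral_one_div_sub_eq (hμ : 0 < μ) (hf : Measurable f) (hf0 : ∀ y, 0 ≤ f y)
    (hfμ : ∀ y, f y ≤ μ) (hκ : ∀ y ≥ κ, f y ≤ μ / 2) (hL : κ ≤ L) :
    ∫ y in κ..L, 1 / (μ - f y) =
      expansionSum f μ k L - expansionSum f μ k κ + ∫ y in κ..L, geomRemainder μ k (f y) := by
  have hpow := intervalIntegrable_pow_of_nonneg_of_le hf hf0 hfμ
  have hterm : ∀ j ∈ Finset.range (k + 1),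
      IntervalIntegrable (fun y => f y ^ j / μ ^ (j + 1)) volume κ L :=
    fun j _ => (hpow j κ L).div_const _
  have hgeom : ∀ y ∈ uIcc κ L, 1 / (μ - f y) =
      ∑ j ∈ Finset.range (k + 1), f y ^ j / μ ^ (j + 1) + geomRemainder μ k (f y) := by
    intro y hy
    have := hκ y (uIcc_of_le hL ▸ hy).1
    exact one_div_sub_eq_geom_sum_add hμ.ne' (by linarith) k
  rw [intervalIntegral.integral_congr hgeom, intervalIntegral.integral_add
    (by simpa only [Finset.sum_fn] using IntervalIntegrable.sum _ hterm)
    (intervalIntegrable_geomRemainder hμ hf hf0 hfμ hκ hL),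
    intervalIntegral.integral_finsetSum hterm, expansionSum, expansionSum,
    ← Finset.sum_sub_distrib]
  congr 1
  refine Finset.sum_congr rfl fun j _ => ?_
  rw [← intervalIntegral.integral_add_adjacent_intervals (hpow j 0 κ) (hpow j κ L),
    intervalIntegral.integral_div]
  ring

theorem integral_geomRemainder_nonneg (hμ : 0 < μ) (hf0 : ∀ y, 0 ≤ f y)
    (hκ : ∀ y ≥ κ, f y ≤ μ / 2) (hL : κ ≤ L) :
    0 ≤ ∫ y in κ..L, geomRemainder μ k (f y) :=
  intervalIntegral.integral_nonneg hL fun y hy => geomRemainder_nonneg hμ (hf0 y) (hκ y hy.1)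

theorem integral_geomRemainder_le (hμ : 0 < μ) (hf : Measurable f) (hf0 : ∀ y, 0 ≤ f y)
    (hfμ : ∀ y, f y ≤ μ) (hκ0 : 0 ≤ κ) (hκ : ∀ y ≥ κ, f y ≤ μ / 2) (hL : κ ≤ L) :
    ∫ y in κ..L, geomRemainder μ k (f y) ≤ 2 / μ ^ (k + 2) * ∫ y in (0 : ℝ)..L, f y ^ (k + 1) := by
  have hpow := intervalIntegrable_pow_of_nonneg_of_le hf hf0 hfμ (k + 1)
  have hinit : 0 ≤ ∫ y in (0 : ℝ)..κ, f y ^ (k + 1) :=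
    intervalIntegral.integral_nonneg hκ0 fun y _ => pow_nonneg (hf0 y) _
  calc ∫ y in κ..L, geomRemainder μ k (f y)
      ≤ ∫ y in κ..L, 2 / μ ^ (k + 2) * f y ^ (k + 1) :=
        intervalIntegral.integral_mono_on hL (intervalIntegrable_geomRemainder hμ hf hf0 hfμ hκ hL)
          ((hpow κ L).const_mul _) fun y hy => geomRemainder_le hμ (hf0 y) (hκ y hy.1)
    _ ≤ 2 / μ ^ (k + 2) * ∫ y in (0 : ℝ)..L, f y ^ (k + 1) := by
        rw [intervalIntegral.integral_const_mul,
          ← intervalIntegral.integral_add_adjacent_intervals (hpow 0 κ) (hpow κ L)]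
        gcongr
        linarith

end Expansion

theorem bn_higher_expansion_general
    (Λ : Measure ℝ) (hΛ : Λ ≠ 0) (hsupp : Λ (Icc (0 : ℝ) 1)ᶜ = 0)
    (hμfin : (∫⁻ p in Icc (0 : ℝ) 1,
      (if p = 0 ∨ p = 1 then ⊤ else ENNReal.ofReal (Real.log (1 / (1 - p)) / p ^ 2)) ∂Λ) ≠ ⊤)
    (μ : ℝ) (hμ : μ = ∫ p in Icc (0 : ℝ) 1, Real.log (1 / (1 - p)) / p ^ 2 ∂Λ)
    (f : ℝ → ℝ)
    (hf : ∀ y : ℝ,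
      f y = ∫ p in Icc (0 : ℝ) 1, (1 - (1 - p) ^ Real.exp y) / Real.exp y / p ^ 2 ∂Λ)
    (κ : ℝ) (hκ0 : 0 ≤ κ) (hκ : ∀ y ≥ κ, f y ≤ μ / 2)
    (b : ℕ → ℝ) (hb : ∀ n : ℕ, b n = ∫ y in κ..Real.log n, 1 / (μ - f y))
    (k : ℕ) :
    ∃ g h : ℕ → ℝ,
      (∀ n : ℕ,
        b n = Real.log n / μ +
            (∑ j ∈ Finset.Icc 1 k, (1 / μ ^ (j + 1)) * ∫ y in (0 : ℝ)..Real.log n, f y ^ j) +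
            g n + h n) ∧
      g =O[atTop] (fun n : ℕ => ∫ y in (0 : ℝ)..Real.log n, f y ^ (k + 1)) ∧
      h =O[atTop] (fun _ : ℕ => (1 : ℝ)) := by
  have hf_eq : f = fun y => ∫ p in Icc (0 : ℝ) 1, fIntegrand y p ∂Λ := funext hf
  have hμpos : 0 < μ := hμ ▸ setIntegral_muIntegrand_pos hΛ hsupp hμfin
  have hf0 : ∀ y, 0 ≤ f y := hf_eq ▸ setIntegral_fIntegrand_nonneg hμfin
  have hfμ : ∀ y, f y ≤ μ := hf_eq ▸ hμ ▸ setIntegral_fIntegrand_le hμfin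
  have hfm : Measurable f := hf_eq ▸ (antitone_setIntegral_fIntegrand hμfin).measurable
  have hlog : ∀ᶠ n : ℕ in atTop, κ ≤ Real.log n :=
    (Real.tendsto_log_atTop.comp tendsto_natCast_atTop_atTop).eventually_ge_atTop κ
  refine ⟨fun n => b n - expansionSum f μ k (Real.log n) + expansionSum f μ k κ,
    fun _ => -expansionSum f μ k κ, fun n => by rw [← expansionSum_eq]; ring, ?_,
    isBigO_const_const _ one_ne_zero _⟩
  refine IsBigO.of_bound (2 / μ ^ (k + 2)) (hlog.mono fun n hn => ?_)
  have hrem : b n - expansionSum f μ k (Real.log n) + expansionSum f μ k κ =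
      ∫ y in κ..Real.log n, geomRemainder μ k (f y) := by
    rw [hb n, integral_one_div_sub_eq hμpos hfm hf0 hfμ hκ hn]
    ring
  rw [hrem, Real.norm_of_nonneg (integral_geomRemainder_nonneg hμpos hf0 hκ hn),
    Real.norm_of_nonneg (intervalIntegral.integral_nonneg (hκ0.trans hn) fun y _ =>
      pow_nonneg (hf0 y) _)]
  exact integral_geomRemainder_le hμpos hfm hf0 hfμ hκ0 hκ hn

/-- Let `Λ` be a finite, non-zero measure on `[0,1]` with
`μ := ∫_{[0,1]} log(1/(1-p)) p⁻² Λ(dp) < ∞`, let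
`f y := ∫_{[0,1]} (1 - (1-p)^(e^y)) e^{-y} p⁻² Λ(dp)`, choose `κ ≥ 0` with `f ≤ μ/2` on
`[κ,∞)`, and set `b_n := ∫_κ^{log n} dy/(μ - f y)`.  Then for every `k ≥ 1`, as `n → ∞`,
`b_n = log n/μ + Σ_{j=1}^k μ^{-(j+1)} ∫_0^{log n} f(y)^j dy + O(∫_0^{log n} f(y)^{k+1} dy) + O(1)`. -/
theorem bn_higher_expansion
    (Λ : Measure ℝ) [IsFiniteMeasure Λ] (hΛ : Λ ≠ 0) (hsupp : Λ (Icc (0 : ℝ) 1)ᶜ = 0)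
    (hμfin : (∫⁻ p in Icc (0 : ℝ) 1,
      (if p = 0 ∨ p = 1 then ⊤ else ENNReal.ofReal (Real.log (1 / (1 - p)) / p ^ 2)) ∂Λ) ≠ ⊤)
    (μ : ℝ) (hμ : μ = ∫ p in Icc (0 : ℝ) 1, Real.log (1 / (1 - p)) / p ^ 2 ∂Λ)
    (f : ℝ → ℝ)
    (hf : ∀ y : ℝ,
      f y = ∫ p in Icc (0 : ℝ) 1, (1 - (1 - p) ^ Real.exp y) / Real.exp y / p ^ 2 ∂Λ)
    (κ : ℝ) (hκ0 : 0 ≤ κ) (hκ : ∀ y ≥ κ, f y ≤ μ / 2)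
    (b : ℕ → ℝ) (hb : ∀ n : ℕ, b n = ∫ y in κ..Real.log n, 1 / (μ - f y))
    (k : ℕ) (hk : 1 ≤ k) :
    ∃ g h : ℕ → ℝ,
      (∀ n : ℕ,
        b n = Real.log n / μ +
            (∑ j ∈ Finset.Icc 1 k, (1 / μ ^ (j + 1)) * ∫ y in (0 : ℝ)..Real.log n, f y ^ j) +
            g n + h n) ∧
      g =O[atTop] (fun n : ℕ => ∫ y in (0 : ℝ)..Real.log n, f y ^ (k + 1)) ∧
      h =O[atTop] (fun _ : ℕ => (1 : ℝ)) :=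
  bn_higher_expansion_general Λ hΛ hsupp hμfin μ hμ f hf κ hκ0 hκ b hb k
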